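/- For i.i.d. zero-mean Gumbel random variables and a potential θ over X = X₁ × ⋯ × Xₙ with each Xᵢ finite, the log-partition function satisfies the alternating expectation-maximization identity: log Z = E_{γ₁} max_{x₁} E_{γ₂} max_{x₂} ⋯ E_{γₙ} max_{xₙ} { θ(x₁,…,xₙ) + Σᵢ γᵢ(xᵢ) }, where for each i the collection {γᵢ(xᵢ)}_{xᵢ∈Xᵢ} consists of i.i.d. zero-mean Gumbel variables. -/

import Mathlib

open MeasureTheory Real

/-- Density of the zero-mean Gumbel distribution, whose CDF is `exp (-exp (-(t + c)))`. -/
noncomputable def gumbelPDF (t : ℝ) : ℝ :=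
  Real.exp (-(t + Real.eulerMascheroniConstant)) *
    Real.exp (-Real.exp (-(t + Real.eulerMascheroniConstant)))

/-- The zero-mean Gumbel measure on `ℝ`. -/
noncomputable def gumbel : Measure ℝ :=
  MeasureTheory.volume.withDensity fun t => ENNReal.ofReal (gumbelPDF t)

/-! With `F t = exp (-exp (-(t + γ)))` the Gumbel CDF (`γ` Euler's constant), we have
`∏ₐ F (t - f a) = F (t - log ∑ₐ exp (f a))`: the maximum of `f a + g a` over independent Gumbel
variables `g a` is again Gumbel, shifted by `log ∑ₐ exp (f a)`. The Gumbel law has mean zero, since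
the substitution `u = exp (-(t + γ))` turns `E[t + γ]` into `-∫ log u e⁻ᵘ du = -Γ'(1) = γ`. Hence
each expectation-maximization step computes a log-sum-exp, and by downward induction on `j`,
`Φ j x` is the log of the sum of `exp ∘ θ` over the configurations agreeing with `x` on the first
`j` coordinates. -/

open Set Filter Topology

local notation "γ" => Real.eulerMascheroniConstant

section Substitution

variable (c : ℝ)

lemma hasDerivAt_exp_neg_add (t : ℝ) :
    HasDerivAt (fun t ↦ exp (-(t + c))) (-exp (-(t + c))) t := by
  simpa using (((hasDerivAt_id t).add_const c).neg).exp

lemma image_univ_exp_neg_add : (fun t ↦ exp (-(t + c))) '' univ = Ioi 0 := by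
  rw [image_univ, ← range_exp]
  exact (Function.RightInverse.surjective (f := fun t ↦ -(t + c)) (g := fun s ↦ -s - c)
    fun s ↦ by ring).range_comp exp

lemma injective_exp_neg_add : Function.Injective fun t ↦ exp (-(t + c)) := fun a b h ↦ by
  simpa using exp_injective h

lemma integral_Ioi_eq_integral_exp_neg_add (g : ℝ → ℝ) :
    ∫ u in Ioi 0, g u = ∫ t, exp (-(t + c)) * g (exp (-(t + c))) := by
  rw [← image_univ_exp_neg_add c, integral_image_eq_integral_abs_deriv_smul MeasurableSet.univ
    (fun t _ ↦ (hasDerivAt_exp_neg_add c t).hasDerivWithinAt) (injective_exp_neg_add c).injOn,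
    Measure.restrict_univ]
  simp [abs_of_pos (exp_pos _)]

end Substitution

lemma integral_log_mul_exp_neg : ∫ u in Ioi 0, log u * exp (-u) = -γ := by
  have hGamma : Complex.Gamma =ᶠ[𝓝 1] Complex.GammaIntegral := by
    filter_upwards [Complex.continuous_re.isOpen_preimage _ isOpen_Ioi |>.mem_nhds
      (by simp : (1 : ℂ) ∈ Complex.re ⁻¹' Ioi 0)] with s hs using Complex.Gamma_eq_integral hs
  have h := (Complex.hasDerivAt_GammaIntegral (s := 1) (by simp)).unique
    (Complex.hasDerivAt_Gamma_one.congr_of_eventuallyEq hGamma.symm)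
  simp only [sub_self, Complex.cpow_zero, one_mul] at h
  apply Complex.ofReal_injective
  rw [Complex.ofReal_neg, ← h, ← integral_complex_ofReal]
  push_cast
  rfl

lemma eulerMascheroniConstant_ne_zero : γ ≠ 0 :=
  (one_half_pos.trans one_half_lt_eulerMascheroniConstant).ne'

noncomputable def gumbelCDF (t : ℝ) : ℝ := exp (-exp (-(t + γ)))

lemma hasDerivAt_gumbelCDF (t : ℝ) : HasDerivAt gumbelCDF (gumbelPDF t) t :=
  (hasDerivAt_exp_neg_add γ t).fun_neg.exp.congr_deriv (by rw [gumbelPDF, neg_neg, mul_comm])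

lemma tendsto_gumbelCDF_atBot : Tendsto gumbelCDF atBot (𝓝 0) :=
  tendsto_exp_atBot.comp <| tendsto_neg_atTop_atBot.comp <| tendsto_exp_atTop.comp <|
    tendsto_neg_atBot_atTop.comp <| tendsto_atBot_add_const_right _ γ tendsto_id

lemma gumbelPDF_nonneg (t : ℝ) : 0 ≤ gumbelPDF t := by
  unfold gumbelPDF
  positivity

lemma integral_gumbelPDF : ∫ t, gumbelPDF t = 1 := by
  have h := integral_Ioi_eq_integral_exp_neg_add γ fun u ↦ exp (-u)
  rw [integral_exp_neg_Ioi_zero] at h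
  exact h.symm

-- A non-integrable function has Bochner integral `0`, so a nonzero integral proves integrability.
lemma integrable_gumbelPDF : Integrable gumbelPDF :=
  .of_integral_ne_zero <| by simp [integral_gumbelPDF]

lemma integral_gumbel (f : ℝ → ℝ) : ∫ t, f t ∂gumbel = ∫ t, gumbelPDF t * f t := by
  rw [gumbel, integral_withDensity_eq_integral_toReal_smul (by unfold gumbelPDF; fun_prop)
    (.of_forall fun _ ↦ ENNReal.ofReal_lt_top)]
  simp [ENNReal.toReal_ofReal (gumbelPDF_nonneg _)]

lemma gumbel_apply_Iic (a : ℝ) : gumbel (Iic a) = ENNReal.ofReal (gumbelCDF a) := by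
  rw [gumbel, withDensity_apply _ measurableSet_Iic, ← ofReal_integral_eq_lintegral_ofReal
    integrable_gumbelPDF.integrableOn (.of_forall gumbelPDF_nonneg),
    integral_Iic_of_hasDerivAt_of_tendsto' (fun t _ ↦ hasDerivAt_gumbelCDF t)
      integrable_gumbelPDF.integrableOn tendsto_gumbelCDF_atBot, sub_zero]

instance : IsProbabilityMeasure gumbel := by
  refine ⟨?_⟩
  rw [gumbel, withDensity_apply _ MeasurableSet.univ, Measure.restrict_univ,
    ← ofReal_integral_eq_lintegral_ofReal integrable_gumbelPDF (.of_forall gumbelPDF_nonneg),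
    integral_gumbelPDF, ENNReal.ofReal_one]

lemma integral_add_eulerMascheroniConstant_gumbel : ∫ t, (t + γ) ∂gumbel = γ := by
  calc ∫ t, (t + γ) ∂gumbel
      = ∫ t, exp (-(t + γ)) * (-log (exp (-(t + γ))) * exp (-exp (-(t + γ)))) := by
        rw [integral_gumbel]
        congr 1 with t
        rw [log_exp, gumbelPDF]
        ring
    _ = -∫ u in Ioi 0, log u * exp (-u) := by
        rw [← integral_neg, integral_Ioi_eq_integral_exp_neg_add γ]
        simp only [neg_mul, mul_neg]
    _ = γ := by rw [integral_log_mul_exp_neg, neg_neg]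

lemma integral_add_gumbel (r : ℝ) : ∫ t, (t + r) ∂gumbel = r := by
  have h : Integrable (fun t ↦ t + γ) gumbel := .of_integral_ne_zero <| by
    rw [integral_add_eulerMascheroniConstant_gumbel]
    exact eulerMascheroniConstant_ne_zero
  simp_rw [show ∀ t, t + r = (t + γ) + (r - γ) by intro t; ring]
  rw [integral_add h (integrable_const _), integral_add_eulerMascheroniConstant_gumbel]
  simp

lemma prod_gumbelCDF_sub {ι : Type*} {s : Finset ι} (hs : s.Nonempty) (f : ι → ℝ) (a : ℝ) :
    ∏ i ∈ s, gumbelCDF (a - f i) = gumbelCDF (a - log (∑ i ∈ s, exp (f i))) := by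
  have hshift : ∀ b, gumbelCDF (a - b) = exp (-(exp (-(a + γ)) * exp b)) := fun b ↦ by
    rw [gumbelCDF, ← exp_add]
    ring_nf
  simp_rw [hshift, exp_log (Finset.sum_pos (fun i _ ↦ exp_pos (f i)) hs), ← exp_sum,
    Finset.mul_sum, Finset.sum_neg_distrib]

section GumbelMax

variable {A : Type*} [Fintype A] [Nonempty A]

lemma measurable_sup'_add (f : A → ℝ) :
    Measurable fun g : A → ℝ ↦ Finset.univ.sup' Finset.univ_nonempty fun a ↦ f a + g a := by
  convert Finset.measurable_sup' (f := fun a (g : A → ℝ) ↦ f a + g a) Finset.univ_nonempty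
    fun a _ ↦ (measurable_pi_apply a).const_add (f a) using 1
  ext g
  simp [Finset.sup'_apply]

lemma map_sup'_add_pi_gumbel (f : A → ℝ) :
    (Measure.pi fun _ : A ↦ gumbel).map
        (fun g ↦ Finset.univ.sup' Finset.univ_nonempty fun a ↦ f a + g a) =
      gumbel.map (· + log (∑ a, exp (f a))) := by
  have : IsProbabilityMeasure ((Measure.pi fun _ : A ↦ gumbel).map
      (fun g ↦ Finset.univ.sup' Finset.univ_nonempty fun a ↦ f a + g a)) :=
    Measure.isProbabilityMeasure_map (measurable_sup'_add f).aemeasurable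
  refine Measure.ext_of_Iic _ _ fun x ↦ ?_
  have hpre : (fun g : A → ℝ ↦ Finset.univ.sup' Finset.univ_nonempty fun a ↦ f a + g a) ⁻¹'
      Iic x = univ.pi fun a ↦ Iic (x - f a) := by
    ext g
    simp only [mem_preimage, mem_Iic, Finset.sup'_le_iff, Finset.mem_univ, true_implies,
      mem_univ_pi, le_sub_iff_add_le']
  rw [Measure.map_apply (measurable_sup'_add f) measurableSet_Iic,
    Measure.map_apply (measurable_add_const _) measurableSet_Iic, hpre, Measure.pi_pi,
    preimage_add_const_Iic]
  simp_rw [gumbel_apply_Iic]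
  rw [← ENNReal.ofReal_prod_of_nonneg (f := fun a ↦ gumbelCDF (x - f a))
    fun _ _ ↦ (exp_pos _).le,
    prod_gumbelCDF_sub Finset.univ_nonempty]

lemma integral_sup'_add_pi_gumbel (f : A → ℝ) :
    ∫ g, Finset.univ.sup' Finset.univ_nonempty (fun a ↦ f a + g a) ∂Measure.pi (fun _ ↦ gumbel) =
      log (∑ a, exp (f a)) := by
  rw [← integral_map (f := fun t ↦ t) (measurable_sup'_add f).aemeasurable
    aestronglyMeasurable_id, map_sup'_add_pi_gumbel,
    integral_map (f := fun t ↦ t) (measurable_add_const _).aemeasurable aestronglyMeasurable_id,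
    integral_add_gumbel]

end GumbelMax

section AgreeBelow

variable {n : ℕ} {X : Fin n → Type*} [∀ i, Fintype (X i)]

open Classical in
noncomputable def agreeBelow (j : ℕ) (x : ∀ i, X i) : Finset (∀ i, X i) :=
  Finset.univ.filter fun y ↦ ∀ i : Fin n, (i : ℕ) < j → y i = x i

lemma mem_agreeBelow {j : ℕ} {x y : ∀ i, X i} :
    y ∈ agreeBelow j x ↔ ∀ i : Fin n, (i : ℕ) < j → y i = x i := by
  simp [agreeBelow]

lemma self_mem_agreeBelow (j : ℕ) (x : ∀ i, X i) : x ∈ agreeBelow j x :=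
  mem_agreeBelow.2 fun _ _ ↦ rfl

lemma agreeBelow_zero (x : ∀ i, X i) : agreeBelow 0 x = Finset.univ := by
  ext y
  simp [mem_agreeBelow]

lemma agreeBelow_self (x : ∀ i, X i) : agreeBelow n x = {x} := by
  ext y
  simp only [mem_agreeBelow, Fin.is_lt, true_implies, Finset.mem_singleton, funext_iff]

lemma mem_agreeBelow_succ_update {j : Fin n} {x y : ∀ i, X i} {a : X j} :
    y ∈ agreeBelow (j + 1) (Function.update x j a) ↔ y ∈ agreeBelow j x ∧ y j = a := by
  simp only [mem_agreeBelow, Nat.lt_succ_iff_lt_or_eq, Fin.val_inj]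
  constructor
  · intro h
    refine ⟨fun i hi ↦ ?_, by simpa using h j (.inr rfl)⟩
    simpa [Fin.ne_of_lt hi] using h i (.inl hi)
  · rintro ⟨h, rfl⟩ i (hi | rfl)
    · simpa [Fin.ne_of_lt hi] using h i hi
    · simp

lemma sum_agreeBelow_eq_sum_sum_update {M : Type*} [AddCommMonoid M] (j : Fin n)
    (x : ∀ i, X i) (f : (∀ i, X i) → M) :
    ∑ y ∈ agreeBelow j x, f y = ∑ a, ∑ y ∈ agreeBelow (j + 1) (Function.update x j a), f y := by
  classical
  rw [← Finset.sum_fiberwise (agreeBelow j x) (fun y ↦ y j) f]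
  refine Finset.sum_congr rfl fun a _ ↦ Finset.sum_congr ?_ fun _ _ ↦ rfl
  ext y
  rw [Finset.mem_filter, mem_agreeBelow_succ_update]

end AgreeBelow

/-- Alternating expectation-maximization identity for the log-partition function:
`log Z = E_{γ₁} max_{x₁} ⋯ E_{γₙ} max_{xₙ} {θ(x) + Σᵢ γᵢ(xᵢ)}`, expressed via
the inside-out recursion `Φ j x = E_{γ_{j+1}} max_{x_{j+1}} {Φ (j+1) (x with x_{j+1}) + γ_{j+1}(x_{j+1})}`
with `Φ n = θ`, so that `Φ 0 = log Z`. -/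
theorem stmt_3 {n : ℕ} {X : Fin n → Type} [∀ i, Fintype (X i)] [∀ i, Nonempty (X i)]
    (θ : (∀ i, X i) → ℝ) (Φ : ℕ → (∀ i, X i) → ℝ)
    (hΦn : Φ n = θ)
    (hΦ : ∀ j : Fin n, ∀ x : ∀ i, X i,
      Φ j x = ∫ g : X j → ℝ,
          (Finset.univ.sup' Finset.univ_nonempty fun a : X j =>
            Φ ((j : ℕ) + 1) (Function.update x j a) + g a)
        ∂(Measure.pi fun _ : X j => gumbel)) :
    ∀ x : ∀ i, X i,
      Φ 0 x = Real.log (∑ y : ∀ i, X i, Real.exp (θ y)) := by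
  have hΦ_log_sum : ∀ j ≤ n, ∀ x, Φ j x = log (∑ y ∈ agreeBelow j x, exp (θ y)) := by
    intro j hj
    induction hj using Nat.decreasingInduction with
    | self => intro x; rw [hΦn, agreeBelow_self, Finset.sum_singleton, log_exp]
    | of_succ j hj ih =>
      intro x
      rw [hΦ ⟨j, hj⟩ x, integral_sup'_add_pi_gumbel, sum_agreeBelow_eq_sum_sum_update ⟨j, hj⟩]
      congr 1
      refine Finset.sum_congr rfl fun a _ ↦ ?_
      rw [ih, exp_log (Finset.sum_pos (fun _ _ ↦ exp_pos _) ⟨_, self_mem_agreeBelow _ _⟩)]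
  intro x
  rw [hΦ_log_sum 0 (Nat.zero_le n) x, agreeBelow_zero]
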